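/- Let n ≥ 1 and let L : ℝ^{n+1} → ℝ be positively 2-homogeneous (L(c·v) = c²·L(v) for all v and all c > 0), of class C^∞ on ℝ^{n+1} \ {0}, and such that for every v ≠ 0 the Hessian of L at v (the symmetric bilinear form of second partial derivatives) is nondegenerate of signature (−,+,…,+), i.e. it is negative definite on some line and positive definite on a complementary n-dimensional subspace. Then the set {v ∈ ℝ^{n+1} : L(v) < 0} of timelike vectors is nonempty. -/

import Mathlib

open Filter Set
open scoped Topology RealInnerProductSpace


/-- Beem's Lorentz–Finsler structure in a single tangent space
`ℝ^{n+1}`: if `L` is positively 2-homogeneous, `C^∞` away from the origin, and its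
Hessian at every nonzero point is nondegenerate of signature `(−,+,…,+)` (i.e.
negative definite on some line and positive definite on a complementary
`n`-dimensional subspace), then the set of timelike vectors `{L < 0}` is nonempty. -/
theorem timelike_vectors_nonempty (n : ℕ) (hn : 1 ≤ n)
    (L : EuclideanSpace ℝ (Fin (n + 1)) → ℝ)
    (hsmooth : ContDiffOn ℝ (⊤ : ℕ∞) L {0}ᶜ)
    (hhom : ∀ (v : EuclideanSpace ℝ (Fin (n + 1))) (c : ℝ), 0 < c → L (c • v) = c ^ 2 * L v)
    (hsig : ∀ v : EuclideanSpace ℝ (Fin (n + 1)), v ≠ 0 →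
      ∃ (e : EuclideanSpace ℝ (Fin (n + 1)))
        (W : Submodule ℝ (EuclideanSpace ℝ (Fin (n + 1)))),
        IsCompl (Submodule.span ℝ {e}) W ∧
        Module.finrank ℝ W = n ∧
        fderiv ℝ (fderiv ℝ L) v e e < 0 ∧
        ∀ w ∈ W, w ≠ 0 → 0 < fderiv ℝ (fderiv ℝ L) v w w) :
    ∃ v : EuclideanSpace ℝ (Fin (n + 1)), L v < 0 := by
  by_contra hcon
  push_neg at hcon
  -- minimize L on the unit sphere
  have hne : (Metric.sphere (0 : EuclideanSpace ℝ (Fin (n + 1))) 1).Nonempty := NormedSpace.sphere_nonempty.mpr zero_le_one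
  have hcs : IsCompact (Metric.sphere (0 : EuclideanSpace ℝ (Fin (n + 1))) 1) := isCompact_sphere _ _
  have hLc : ContinuousOn L (Metric.sphere (0 : EuclideanSpace ℝ (Fin (n + 1))) 1) := by
    refine hsmooth.continuousOn.mono ?_
    intro x hx
    have : ‖x‖ = 1 := mem_sphere_zero_iff_norm.1 hx
    simp only [mem_compl_iff, mem_singleton_iff]
    intro h; rw [h] at this; simp at this
  obtain ⟨v0, hv0mem, hmin⟩ := hcs.exists_isMinOn hne hLc
  have hv0 : ‖v0‖ = 1 := mem_sphere_zero_iff_norm.1 hv0mem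
  have hv0ne : v0 ≠ 0 := by intro h; rw [h] at hv0; simp at hv0
  set m := L v0 with hm
  have hm0 : 0 ≤ m := hcon v0
  have key : ∀ u : EuclideanSpace ℝ (Fin (n + 1)), m * ‖u‖ ^ 2 ≤ L u := by
    intro u
    rcases eq_or_ne u 0 with rfl | hu
    · simpa using hcon 0
    · have hc : 0 < ‖u‖ := norm_pos_iff.2 hu
      have hw : ‖(‖u‖⁻¹ • u : EuclideanSpace ℝ (Fin (n + 1)))‖ = 1 := by
        rw [norm_smul, norm_inv, norm_norm, inv_mul_cancel₀ hc.ne']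
      have h2 := hhom (‖u‖⁻¹ • u) ‖u‖ hc
      rw [smul_inv_smul₀ hc.ne'] at h2
      have hge : m ≤ L (‖u‖⁻¹ • u) := hmin (mem_sphere_zero_iff_norm.2 hw)
      nlinarith [sq_nonneg ‖u‖]
  obtain ⟨e, W, -, -, hneg, -⟩ := hsig v0 hv0ne
  set H := fderiv ℝ (fderiv ℝ L) v0 e e with hHdef
  -- smoothness facts
  have hopen : IsOpen ({0}ᶜ : Set (EuclideanSpace ℝ (Fin (n + 1)))) := isOpen_compl_singleton
  have hdiff : ∀ x : EuclideanSpace ℝ (Fin (n + 1)), x ≠ 0 → DifferentiableAt ℝ L x := fun x hx =>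
    (hsmooth.contDiffAt (hopen.mem_nhds hx)).differentiableAt (by simp)
  have hC2 : ContDiffAt ℝ 2 L v0 :=
    (hsmooth.contDiffAt (hopen.mem_nhds hv0ne)).of_le (WithTop.coe_le_coe.mpr le_top)
  have hdL : DifferentiableAt ℝ (fderiv ℝ L) v0 :=
    (hC2.fderiv_right (m := 1) (by norm_num)).differentiableAt (by norm_num)
  -- the path
  have hp : ∀ t : ℝ, HasDerivAt (fun s : ℝ => v0 + s • e) e t := by
    intro t
    simpa using ((hasDerivAt_id t).smul_const e).const_add v0
  set δ0 : ℝ := (‖e‖ + 1)⁻¹ with hδ0def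
  have hδ0 : 0 < δ0 := by positivity
  have hpne : ∀ t : ℝ, |t| < δ0 → v0 + t • e ≠ 0 := by
    intro t ht h0
    have h1 : v0 = -(t • e) := by
      have := congrArg (fun x => x - t • e) h0
      simpa [sub_eq_add_neg] using this
    have h2 : (1:ℝ) = |t| * ‖e‖ := by
      rw [← hv0, h1, norm_neg, norm_smul, Real.norm_eq_abs]
    have h3 : |t| * (‖e‖ + 1) < 1 := by
      calc |t| * (‖e‖ + 1) < δ0 * (‖e‖ + 1) := by
            apply mul_lt_mul_of_pos_right ht (by positivity)
        _ = 1 := by rw [hδ0def]; field_simp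
    nlinarith [abs_nonneg t, norm_nonneg e]
  -- first derivative of φ
  have hφ : ∀ t : ℝ, |t| < δ0 →
      HasDerivAt (fun s : ℝ => L (v0 + s • e)) (fderiv ℝ L (v0 + t • e) e) t := by
    intro t ht
    exact (hdiff _ (hpne t ht)).hasFDerivAt.comp_hasDerivAt t (hp t)
  -- second derivative at 0
  have hg1 : HasDerivAt (fun t : ℝ => fderiv ℝ L (v0 + t • e) e) H 0 := by
    have hp0 : HasFDerivAt (fderiv ℝ L) (fderiv ℝ (fderiv ℝ L) v0) (v0 + (0:ℝ) • e) := by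
      simpa using hdL.hasFDerivAt
    have h1 : HasDerivAt (fun t : ℝ => fderiv ℝ L (v0 + t • e))
        (fderiv ℝ (fderiv ℝ L) v0 e) 0 := hp0.comp_hasDerivAt 0 (hp 0)
    have h2 := (ContinuousLinearMap.apply ℝ ℝ e).hasFDerivAt.comp_hasDerivAt 0 h1
    exact h2
  -- inner-product derivatives
  have hr : ∀ t : ℝ, HasDerivAt (fun s : ℝ => ⟪(v0 + s • e : EuclideanSpace ℝ (Fin (n + 1))), v0 + s • e⟫)
      (2 * ⟪(v0 + t • e : EuclideanSpace ℝ (Fin (n + 1))), e⟫) t := by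
    intro t
    have heq : (2:ℝ) * ⟪(v0 + t • e : EuclideanSpace ℝ (Fin (n + 1))), e⟫
        = ⟪(v0 + t • e : EuclideanSpace ℝ (Fin (n + 1))), e⟫
          + ⟪(e : EuclideanSpace ℝ (Fin (n + 1))), v0 + t • e⟫ := by
      rw [real_inner_comm e]; ring
    rw [heq]
    exact (hp t).inner ℝ (hp t)
  have hq1 : HasDerivAt (fun t : ℝ => ⟪(v0 + t • e : EuclideanSpace ℝ (Fin (n + 1))), e⟫) (⟪(e : EuclideanSpace ℝ (Fin (n + 1))), e⟫) 0 := by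
    have := (hp 0).inner ℝ (hasDerivAt_const (0:ℝ) e)
    simpa using this
  -- the comparison function
  set g : ℝ → ℝ := fun t => L (v0 + t • e) - m * ⟪(v0 + t • e : EuclideanSpace ℝ (Fin (n + 1))), v0 + t • e⟫ with hgdef
  set g' : ℝ → ℝ := fun t => fderiv ℝ L (v0 + t • e) e - m * (2 * ⟪(v0 + t • e : EuclideanSpace ℝ (Fin (n + 1))), e⟫)
    with hg'def
  have hg : ∀ t : ℝ, |t| < δ0 → HasDerivAt g (g' t) t := by
    intro t ht
    exact (hφ t ht).sub ((hr t).const_mul m)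
  have hgnonneg : ∀ t : ℝ, 0 ≤ g t := by
    intro t
    have := key (v0 + t • e)
    simp only [hgdef]
    rw [real_inner_self_eq_norm_sq]
    linarith
  have hg0 : g 0 = 0 := by
    simp only [hgdef]
    rw [zero_smul, add_zero, real_inner_self_eq_norm_sq, hv0]
    simp [hm]
  have hlocmin : IsLocalMin g 0 := by
    apply Filter.Eventually.of_forall
    intro t
    rw [hg0]; exact hgnonneg t
  have hg'0 : g' 0 = 0 :=
    hlocmin.hasDerivAt_eq_zero (hg 0 (by simpa using hδ0))
  set D : ℝ := H - m * (2 * ⟪(e : EuclideanSpace ℝ (Fin (n + 1))), e⟫) with hDdef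
  have hg'' : HasDerivAt g' D 0 := by
    exact hg1.sub ((hq1.const_mul 2).const_mul m)
  have hDneg : D < 0 := by
    have h1 : (0:ℝ) ≤ ⟪(e : EuclideanSpace ℝ (Fin (n + 1))), e⟫ := real_inner_self_nonneg
    nlinarith
  -- slope argument: g' is negative just right of 0
  have hslope : Tendsto (slope g' 0) (𝓝[≠] (0:ℝ)) (𝓝 D) :=
    hasDerivAt_iff_tendsto_slope.1 hg''
  have hmono : 𝓝[>] (0:ℝ) ≤ 𝓝[≠] (0:ℝ) :=
    nhdsWithin_mono 0 (fun t ht => ne_of_gt ht)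
  have hev1 : ∀ᶠ t in 𝓝[>] (0:ℝ), slope g' 0 t < 0 :=
    (hslope.mono_left hmono).eventually_lt_const hDneg
  have hev2 : ∀ᶠ t in 𝓝[>] (0:ℝ), g' t < 0 := by
    filter_upwards [hev1, self_mem_nhdsWithin] with t ht ht0
    have htpos : 0 < t := ht0
    have : slope g' 0 t = g' t / t := by
      simp [slope_def_field, hg'0]
    rw [this] at ht
    rcases div_neg_iff.1 ht with ⟨h1, h2⟩ | ⟨h1, h2⟩
    · linarith
    · exact h1
  have hev3 : ∀ᶠ t in 𝓝[>] (0:ℝ), g' t < 0 ∧ t < δ0 := by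
    filter_upwards [hev2, Ioo_mem_nhdsGT_of_mem (Set.mem_Ico.mpr ⟨le_refl (0:ℝ), hδ0⟩)]
      with t h1 h2
    exact ⟨h1, h2.2⟩
  obtain ⟨u, hu, hIoo⟩ := mem_nhdsGT_iff_exists_Ioo_subset.1 hev3
  have hupos : 0 < u := hu
  set b : ℝ := u / 2 with hbdef
  have hbpos : 0 < b := by positivity
  have hbmem : b ∈ Ioo (0:ℝ) u := ⟨hbpos, by linarith⟩
  have hbδ : b < δ0 := (hIoo hbmem).2
  have hderiv : ∀ x ∈ Ioo (0:ℝ) b, HasDerivAt g (g' x) x := by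
    intro x hx
    apply hg
    rw [abs_of_pos hx.1]
    linarith [hx.2]
  have hcontg : ContinuousOn g (Icc 0 b) := by
    intro x hx
    have : |x| < δ0 := by
      rw [abs_of_nonneg hx.1]
      linarith [hx.2]
    exact (hg x this).continuousAt.continuousWithinAt
  obtain ⟨c, hc, hcslope⟩ := exists_hasDerivAt_eq_slope g g' hbpos hcontg hderiv
  have hcneg : g' c < 0 := (hIoo ⟨hc.1, lt_trans hc.2 hbmem.2⟩).1
  have : 0 ≤ (g b - g 0) / (b - 0) := by
    rw [hg0]
    apply div_nonneg (by simpa using hgnonneg b) (by linarith)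
  rw [hcslope] at hcneg
  linarith
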